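/- Let H be a finite-dimensional real inner product space with norm ‖·‖, a a symmetric positive semidefinite bilinear form on H with induced seminorm ‖v‖_a = √(a(v,v)), α₀ > 0, and f¹,…,f^N ∈ H. Suppose u⁰,…,u^N ∈ H satisfy, for all k = 0,…,N-1 and all v ∈ H: Σ_{j=0}^{k} b_{k-j} ⟨u^{j+1} - u^j, v⟩ + α₀ a(u^{k+1}, v) = α₀ ⟨f^{k+1}, v⟩, where b_j = (j+1)^{1-α} - j^{1-α} with α ∈ (0,1). Then ‖u^N‖_a² ≤ ‖u⁰‖_a² + α₀ Σ_{k=0}^{N-1} ‖f^{k+1}‖². -/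

import Mathlib

/-!
Test the scheme at step `k` with `v = u (k + 1) - u k =: x k` and sum over `k`. Since the L1
coefficients are nonnegative, nonincreasing and convex, two Abel summations write `b (|j - k|)` as a
nonnegative combination of a constant kernel and Fejér kernels `(n - |j - k|)₊`, each of which is a
Gram kernel. Hence `∑ⱼ ∑ₖ b (|j - k|) ⟪x j, x k⟫ ≥ 0`, and the memory term, its lower triangle, is at
least `½ ∑ ‖x k‖²`. The identity `2 a(v, v - w) = ‖v‖ₐ² - ‖w‖ₐ² + ‖v - w‖ₐ²` telescopes the energy
term, and Young's inequality absorbs the load term into `½ ∑ ‖x k‖²`.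
-/

open Finset
open scoped RealInnerProductSpace

theorem ConvexOn.two_mul_le_add_of_nat {f : ℝ → ℝ} (hf : ConvexOn ℝ (Set.Ici 0) f) (p : ℕ) :
    2 * f (p + 1) ≤ f p + f (p + 2) := by
  have h := hf.2 (Set.mem_Ici.2 p.cast_nonneg) (Set.mem_Ici.2 (by positivity : (0 : ℝ) ≤ p + 2))
    (by norm_num : (0 : ℝ) ≤ 1 / 2) (by norm_num : (0 : ℝ) ≤ 1 / 2) (by norm_num)
  have hmid : (1 / 2 : ℝ) • (p : ℝ) + (1 / 2 : ℝ) • ((p : ℝ) + 2) = p + 1 := by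
    simp only [smul_eq_mul]; ring
  rw [hmid, smul_eq_mul, smul_eq_mul] at h
  linarith

theorem convexOn_rpow_add_one_sub_rpow {γ : ℝ} (h0 : 0 ≤ γ) (h1 : γ ≤ 1) :
    ConvexOn ℝ (Set.Ici 0) (fun x : ℝ => (x + 1) ^ γ - x ^ γ) := by
  have hcont : Continuous (fun x : ℝ => x ^ γ) :=
    continuous_iff_continuousAt.2 fun x => Real.continuousAt_rpow_const x γ (Or.inr h0)
  have hderiv (p : ℝ) {x : ℝ} (hx : 0 < x) :
      HasDerivAt (fun x : ℝ => (x + 1) ^ p - x ^ p)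
        (p * (x + 1) ^ (p - 1) - p * x ^ (p - 1)) x := by
    have h := (Real.hasDerivAt_rpow_const (p := p) (Or.inl (by positivity : x + 1 ≠ 0))).comp x
      ((hasDerivAt_id x).add_const 1)
    simp only [Function.comp_def, id, mul_one] at h
    exact h.sub (Real.hasDerivAt_rpow_const (Or.inl hx.ne'))
  refine convexOn_of_hasDerivWithinAt2_nonneg (convex_Ici 0)
    ((hcont.comp (continuous_add_const 1)).sub hcont).continuousOn
    (f' := fun x => γ * ((x + 1) ^ (γ - 1) - x ^ (γ - 1)))
    (f'' := fun x => γ * ((γ - 1) * (x + 1) ^ (γ - 1 - 1) - (γ - 1) * x ^ (γ - 1 - 1)))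
    (fun x hx => ?_) (fun x hx => ?_) (fun x hx => ?_) <;> rw [interior_Ici] at hx
  · exact ((hderiv γ hx).congr_deriv (by ring)).hasDerivWithinAt
  · exact ((hderiv (γ - 1) hx).const_mul γ).hasDerivWithinAt
  · have hle : (x + 1) ^ (γ - 1 - 1) ≤ x ^ (γ - 1 - 1) :=
      Real.rpow_le_rpow_of_nonpos hx (by linarith) (by linarith)
    exact mul_nonneg h0 (sub_nonneg.2 (mul_le_mul_of_nonpos_left hle (by linarith)))

noncomputable def l1Coeff (γ : ℝ) (j : ℕ) : ℝ := ((j : ℝ) + 1) ^ γ - (j : ℝ) ^ γ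

section l1Coeff

variable {γ : ℝ}

theorem l1Coeff_zero (hγ : γ ≠ 0) : l1Coeff γ 0 = 1 := by
  simp [l1Coeff, Real.zero_rpow hγ]

theorem l1Coeff_nonneg (hγ : 0 ≤ γ) (j : ℕ) : 0 ≤ l1Coeff γ j :=
  sub_nonneg.2 (Real.rpow_le_rpow j.cast_nonneg (by linarith) hγ)

theorem l1Coeff_antitone (h0 : 0 ≤ γ) (h1 : γ ≤ 1) : Antitone (l1Coeff γ) := by
  refine antitone_nat_of_succ_le fun j => ?_
  have h := (Real.concaveOn_rpow h0 h1).neg.two_mul_le_add_of_nat j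
  simp only [l1Coeff, Pi.neg_apply] at h ⊢
  push_cast
  rw [add_assoc, one_add_one_eq_two]
  linarith

theorem l1Coeff_secondDiff_nonneg (h0 : 0 ≤ γ) (h1 : γ ≤ 1) (p : ℕ) :
    0 ≤ l1Coeff γ p - 2 * l1Coeff γ (p + 1) + l1Coeff γ (p + 2) := by
  have h := (convexOn_rpow_add_one_sub_rpow h0 h1).two_mul_le_add_of_nat p
  simp only [l1Coeff] at h ⊢
  push_cast
  linarith

end l1Coeff

theorem eq_add_sum_mul_secondDiff (c : ℕ → ℝ) {m M : ℕ} (h : m ≤ M) :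
    c m = c M + ((M - m : ℕ) : ℝ) * (c M - c (M + 1))
      + ∑ q ∈ range M, (c q - 2 * c (q + 1) + c (q + 2)) * ((q + 1 - m : ℕ) : ℝ) := by
  induction M, h using Nat.le_induction with
  | base =>
    rw [Nat.sub_self, Nat.cast_zero, zero_mul, add_zero, sum_eq_zero, add_zero]
    intro q hq
    rw [Nat.sub_eq_zero_of_le (mem_range.1 hq), Nat.cast_zero, mul_zero]
  | succ M hmM ih =>
    rw [sum_range_succ, Nat.succ_sub hmM, ih]
    push_cast
    ring

section Kernel

variable {H : Type*} [NormedAddCommGroup H] [InnerProductSpace ℝ H]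

theorem sum_sum_inner_nonneg {κ : Type*} (s : Finset κ) (x : κ → H) :
    0 ≤ ∑ j ∈ s, ∑ k ∈ s, ⟪x j, x k⟫ := by
  have h : ∑ j ∈ s, ∑ k ∈ s, ⟪x j, x k⟫ = ⟪∑ j ∈ s, x j, ∑ k ∈ s, x k⟫ := by
    rw [sum_inner]
    simp only [inner_sum]
  exact h ▸ real_inner_self_nonneg

theorem sum_sum_gram_mul_inner_nonneg {ι κ : Type*} (T : Finset ι) (φ : ι → κ → ℝ)
    (s : Finset κ) (x : κ → H) :
    0 ≤ ∑ j ∈ s, ∑ k ∈ s, (∑ t ∈ T, φ t j * φ t k) * ⟪x j, x k⟫ := by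
  have h : ∑ j ∈ s, ∑ k ∈ s, (∑ t ∈ T, φ t j * φ t k) * ⟪x j, x k⟫
      = ∑ t ∈ T, ∑ j ∈ s, ∑ k ∈ s, ⟪φ t j • x j, φ t k • x k⟫ := by
    simp_rw [real_inner_smul_left, real_inner_smul_right, sum_mul]
    rw [sum_congr rfl fun j _ => sum_comm, sum_comm]
    exact sum_congr rfl fun t _ => sum_congr rfl fun j _ => sum_congr rfl fun k _ => by ring
  rw [h]
  exact sum_nonneg fun t _ => sum_sum_inner_nonneg s _

/-- The Fejér kernel `(n - |j - k|)₊` is the Gram kernel of the indicators of the windows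
`[j, j + n)`. -/
theorem sum_sum_fejer_mul_inner_nonneg (n N : ℕ) (x : ℕ → H) :
    0 ≤ ∑ j ∈ range N, ∑ k ∈ range N, ((n - Nat.dist j k : ℕ) : ℝ) * ⟪x j, x k⟫ := by
  let φ : ℕ → ℕ → ℝ := fun t j => if j ≤ t ∧ t < j + n then 1 else 0
  have hφ : ∀ j ∈ range N, ∀ k ∈ range N,
      ((n - Nat.dist j k : ℕ) : ℝ) = ∑ t ∈ range (N + n), φ t j * φ t k := by
    intro j hj k hk
    simp only [φ, mul_ite, mul_one, mul_zero, ← ite_and, sum_boole]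
    congr 1
    rw [mem_range] at hj hk
    rw [show n - j.dist k = min j k + n - max j k by unfold Nat.dist; omega, ← Nat.card_Ico]
    congr 1
    ext t
    simp only [mem_filter, mem_range, mem_Ico]
    omega
  calc 0 ≤ _ := sum_sum_gram_mul_inner_nonneg (range (N + n)) φ (range N) x
    _ = _ := sum_congr rfl fun j hj => sum_congr rfl fun k hk => by rw [hφ j hj k hk]

theorem sum_sum_toeplitz_mul_inner_nonneg (c : ℕ → ℝ) (hc : ∀ p, 0 ≤ c p) (hanti : Antitone c)
    (hconv : ∀ p, 0 ≤ c p - 2 * c (p + 1) + c (p + 2)) (N : ℕ) (x : ℕ → H) :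
    0 ≤ ∑ j ∈ range N, ∑ k ∈ range N, c (Nat.dist j k) * ⟪x j, x k⟫ := by
  have hdecomp : ∀ j ∈ range N, ∀ k ∈ range N, c (Nat.dist j k) * ⟪x j, x k⟫
      = c N * ⟪x j, x k⟫ + (c N - c (N + 1)) * (((N - Nat.dist j k : ℕ) : ℝ) * ⟪x j, x k⟫)
        + ∑ q ∈ range N, (c q - 2 * c (q + 1) + c (q + 2))
            * (((q + 1 - Nat.dist j k : ℕ) : ℝ) * ⟪x j, x k⟫) := by
    intro j hj k hk
    rw [mem_range] at hj hk
    rw [eq_add_sum_mul_secondDiff c (show Nat.dist j k ≤ N by unfold Nat.dist; omega), add_mul,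
      add_mul, sum_mul]
    simp only [mul_assoc, mul_comm ((N - Nat.dist j k : ℕ) : ℝ)]
  rw [sum_congr rfl fun j hj => sum_congr rfl fun k hk => hdecomp j hj k hk]
  simp only [sum_add_distrib]
  refine add_nonneg (add_nonneg ?_ ?_) ?_
  · simp only [← mul_sum]
    exact mul_nonneg (hc N) (sum_sum_inner_nonneg _ x)
  · simp only [← mul_sum]
    exact mul_nonneg (sub_nonneg.2 (hanti N.le_succ)) (sum_sum_fejer_mul_inner_nonneg N N x)
  · rw [sum_congr rfl fun j _ => sum_comm, sum_comm]
    simp only [← mul_sum]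
    exact sum_nonneg fun q _ => mul_nonneg (hconv q) (sum_sum_fejer_mul_inner_nonneg (q + 1) N x)

theorem two_mul_sum_lower_triangle {M : Type*} [AddCommGroup M] (g : ℕ → ℕ → M)
    (hg : ∀ j k, g j k = g k j) (N : ℕ) :
    2 • ∑ k ∈ range N, ∑ j ∈ range (k + 1), g j k
      = ∑ j ∈ range N, ∑ k ∈ range N, g j k + ∑ k ∈ range N, g k k := by
  induction N with
  | zero => simp
  | succ n ih =>
    rw [sum_range_succ, smul_add, ih]
    simp only [sum_range_succ, sum_add_distrib]
    rw [sum_congr rfl fun k _ => hg n k]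
    abel

theorem sum_lower_triangle_toeplitz_mul_inner_ge (c : ℕ → ℝ) (hc : ∀ p, 0 ≤ c p)
    (hanti : Antitone c) (hconv : ∀ p, 0 ≤ c p - 2 * c (p + 1) + c (p + 2)) (N : ℕ) (x : ℕ → H) :
    c 0 / 2 * ∑ k ∈ range N, ‖x k‖ ^ 2
      ≤ ∑ k ∈ range N, ∑ j ∈ range (k + 1), c (k - j) * ⟪x j, x k⟫ := by
  have htri := two_mul_sum_lower_triangle (fun j k => c (Nat.dist j k) * ⟪x j, x k⟫)
    (fun j k => by rw [Nat.dist_comm, real_inner_comm]) N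
  have hlower : ∀ k, ∑ j ∈ range (k + 1), c (Nat.dist j k) * ⟪x j, x k⟫
      = ∑ j ∈ range (k + 1), c (k - j) * ⟪x j, x k⟫ := fun k =>
    sum_congr rfl fun j hj => by
      rw [Nat.dist_eq_sub_of_le (Nat.lt_succ_iff.1 (mem_range.1 hj))]
  simp only [hlower, Nat.dist_self, real_inner_self_eq_norm_sq, nsmul_eq_mul, Nat.cast_ofNat]
    at htri
  rw [← mul_sum] at htri
  linarith [sum_sum_toeplitz_mul_inner_nonneg c hc hanti hconv N x]

end Kernel

theorem two_mul_apply_sub_eq {M : Type*} [AddCommGroup M] [Module ℝ M]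
    (a : M →ₗ[ℝ] M →ₗ[ℝ] ℝ) (hsymm : ∀ v w, a v w = a w v) (v w : M) :
    2 * a v (v - w) = a v v - a w w + a (v - w) (v - w) := by
  simp only [map_sub, LinearMap.sub_apply, hsymm w v]
  ring

theorem sub_le_two_mul_sum_apply_sub {M : Type*} [AddCommGroup M] [Module ℝ M]
    (a : M →ₗ[ℝ] M →ₗ[ℝ] ℝ) (hsymm : ∀ v w, a v w = a w v) (hpos : ∀ w, 0 ≤ a w w)
    (u : ℕ → M) (N : ℕ) :
    a (u N) (u N) - a (u 0) (u 0) ≤ 2 * ∑ k ∈ range N, a (u (k + 1)) (u (k + 1) - u k) := by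
  rw [← sum_range_sub (fun k => a (u k) (u k)), mul_sum]
  exact sum_le_sum fun k _ => by
    linarith [two_mul_apply_sub_eq a hsymm (u (k + 1)) (u k), hpos (u (k + 1) - u k)]

theorem mul_inner_le_sq_div_two_add_sq_div_two {E : Type*} [NormedAddCommGroup E]
    [InnerProductSpace ℝ E] (c : ℝ) (f x : E) :
    c * ⟪f, x⟫ ≤ c ^ 2 / 2 * ‖f‖ ^ 2 + ‖x‖ ^ 2 / 2 := by
  have hnorm : ‖c • f‖ ^ 2 = c ^ 2 * ‖f‖ ^ 2 := by
    rw [norm_smul, Real.norm_eq_abs, mul_pow, sq_abs]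
  rw [← real_inner_smul_left]
  nlinarith [real_inner_le_norm (c • f) x, sq_nonneg (‖c • f‖ - ‖x‖)]

theorem stmt8_general {H : Type*} [NormedAddCommGroup H] [InnerProductSpace ℝ H]
    (a : H →ₗ[ℝ] H →ₗ[ℝ] ℝ)
    (hsymm : ∀ u v : H, a u v = a v u)
    (hpos : ∀ w : H, 0 ≤ a w w)
    (α : ℝ) (hα0 : 0 < α) (hα1 : α < 1)
    (b : ℕ → ℝ) (hb : ∀ j : ℕ, b j = ((j : ℝ) + 1) ^ (1 - α) - (j : ℝ) ^ (1 - α))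
    (α₀ : ℝ) (hα₀ : 0 < α₀)
    (N : ℕ) (f u : ℕ → H)
    (hscheme : ∀ k < N, ∀ v : H,
      (∑ j ∈ Finset.range (k + 1), b (k - j) * ⟪u (j + 1) - u j, v⟫)
        + α₀ * a (u (k + 1)) v = α₀ * ⟪f (k + 1), v⟫) :
    a (u N) (u N) ≤ a (u 0) (u 0) + α₀ * ∑ k ∈ Finset.range N, ‖f (k + 1)‖ ^ 2 := by
  obtain rfl : b = l1Coeff (1 - α) := funext hb
  have hγ0 : 0 ≤ 1 - α := by linarith
  have hγ1 : 1 - α ≤ 1 := by linarith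
  have hmemory := sum_lower_triangle_toeplitz_mul_inner_ge (l1Coeff (1 - α))
    (l1Coeff_nonneg hγ0) (l1Coeff_antitone hγ0 hγ1) (l1Coeff_secondDiff_nonneg hγ0 hγ1) N
    (fun k => u (k + 1) - u k)
  rw [l1Coeff_zero (by linarith)] at hmemory
  have htested : ∑ k ∈ range N, ∑ j ∈ range (k + 1),
        l1Coeff (1 - α) (k - j) * ⟪u (j + 1) - u j, u (k + 1) - u k⟫
      + α₀ * ∑ k ∈ range N, a (u (k + 1)) (u (k + 1) - u k)
      = ∑ k ∈ range N, α₀ * ⟪f (k + 1), u (k + 1) - u k⟫ := by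
    rw [mul_sum, ← sum_add_distrib]
    exact sum_congr rfl fun k hk => hscheme k (mem_range.1 hk) _
  have hyoung : ∑ k ∈ range N, α₀ * ⟪f (k + 1), u (k + 1) - u k⟫
      ≤ α₀ ^ 2 / 2 * ∑ k ∈ range N, ‖f (k + 1)‖ ^ 2
        + (∑ k ∈ range N, ‖u (k + 1) - u k‖ ^ 2) / 2 := by
    rw [mul_sum, sum_div, ← sum_add_distrib]
    exact sum_le_sum fun k _ => mul_inner_le_sq_div_two_add_sq_div_two α₀ _ _
  have henergy := sub_le_two_mul_sum_apply_sub a hsymm hpos u N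
  have hscaled : α₀ * (a (u N) (u N) - a (u 0) (u 0))
      ≤ α₀ * (α₀ * ∑ k ∈ range N, ‖f (k + 1)‖ ^ 2) := by
    linarith [mul_le_mul_of_nonneg_left henergy hα₀.le]
  linarith [le_of_mul_le_mul_left hscaled hα₀]

/-- Unconditional stability of the implicit Euler L1 scheme:
`‖u^N‖_a² ≤ ‖u⁰‖_a² + α₀ Σ_{k=0}^{N-1} ‖f^{k+1}‖²`. -/
theorem stmt8 {H : Type*} [NormedAddCommGroup H] [InnerProductSpace ℝ H]
    [FiniteDimensional ℝ H]
    (a : H →ₗ[ℝ] H →ₗ[ℝ] ℝ)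
    (hsymm : ∀ u v : H, a u v = a v u)
    (hpos : ∀ w : H, 0 ≤ a w w)
    (α : ℝ) (hα0 : 0 < α) (hα1 : α < 1)
    (b : ℕ → ℝ) (hb : ∀ j : ℕ, b j = ((j : ℝ) + 1) ^ (1 - α) - (j : ℝ) ^ (1 - α))
    (α₀ : ℝ) (hα₀ : 0 < α₀)
    (N : ℕ) (f u : ℕ → H)
    (hscheme : ∀ k < N, ∀ v : H,
      (∑ j ∈ Finset.range (k + 1), b (k - j) * ⟪u (j + 1) - u j, v⟫)
        + α₀ * a (u (k + 1)) v = α₀ * ⟪f (k + 1), v⟫) :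
    a (u N) (u N) ≤ a (u 0) (u 0) + α₀ * ∑ k ∈ Finset.range N, ‖f (k + 1)‖ ^ 2 :=
  stmt8_general a hsymm hpos α hα0 hα1 b hb α₀ hα₀ N f u hscheme
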